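/- The assignment g1 -> (1 2), g2 -> (1 3), g3 -> (3 4), g4 -> (2 3), g5 -> (4 5) respects all the defining relations of G_II and hence extends to a group homomorphism rho' : G_II -> S_5, and this homomorphism is surjective. -/

import Mathlib

/-! The relations hold in `S₅` by direct computation. The image of `ρ'` contains the adjacent
transpositions `(1 2) = ρ' g1`, `(2 3) = ρ' g4`, `(3 4) = ρ' g3`, `(4 5) = ρ' g5`, which
generate `S₅`. -/

namespace Stmt7

/-- Generators: `i ↦ g(i+1)` for `i = 0,…,4`. -/
def g (i : Fin 5) : FreeGroup (Fin 5) := FreeGroup.of i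

/-- The braid relator `x y x (y x y)⁻¹`, i.e. `<x,y> = e`. -/
def braid (x y : FreeGroup (Fin 5)) : FreeGroup (Fin 5) := x * y * x * (y * x * y)⁻¹

/-- The commutator relator `x y x⁻¹ y⁻¹`, i.e. `[x,y] = e`. -/
def comm (x y : FreeGroup (Fin 5)) : FreeGroup (Fin 5) := x * y * x⁻¹ * y⁻¹

/-- Relators of the group `G_II` from Theorem 3.5 (union of the Cayley cubic degeneration
and two planes, Type II). -/
def rels : Set (FreeGroup (Fin 5)) :=
  { (g 0) ^ 2, (g 1) ^ 2, (g 2) ^ 2, (g 3) ^ 2, (g 4) ^ 2,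
    comm (g 0) (g 2), comm (g 0) (g 4), comm (g 1) (g 4),
    comm (g 0) (g 1 * g 3 * g 1), comm (g 3) (g 4),
    braid (g 0) (g 1), braid (g 1) (g 2), braid (g 1) (g 3),
    braid (g 2) (g 3), braid (g 2) (g 4) }

/-- The presented group `G_II`. -/
abbrev GII := PresentedGroup rels

open Equiv

theorem _root_.MonoidHom.surjective_of_swap_castSucc_succ_mem_range {M : Type*} [Monoid M]
    {n : ℕ} (φ : M →* Perm (Fin (n + 1)))
    (h : ∀ i : Fin n, swap i.castSucc i.succ ∈ Set.range φ) : Function.Surjective φ :=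
  MonoidHom.mrange_eq_top.1 <| top_unique <| Perm.mclosure_swap_castSucc_succ n ▸
    Submonoid.closure_le.2 (MonoidHom.coe_mrange φ ▸ Set.range_subset_iff.2 h)

def rhoGens : Fin 5 → Perm (Fin 5) :=
  ![swap 0 1, swap 0 2, swap 2 3, swap 1 2, swap 3 4]

theorem lift_rhoGens_eq_one_of_mem_rels : ∀ r ∈ rels, FreeGroup.lift rhoGens r = 1 := by
  rintro r (rfl|rfl|rfl|rfl|rfl|rfl|rfl|rfl|rfl|rfl|rfl|rfl|rfl|rfl|rfl) <;>
    simp only [g, braid, comm, map_mul, map_inv, map_pow, FreeGroup.lift_apply_of] <;>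
    decide

def rho : GII →* Perm (Fin 5) :=
  PresentedGroup.toGroup lift_rhoGens_eq_one_of_mem_rels

theorem rho_of (i : Fin 5) : rho (PresentedGroup.of i) = rhoGens i :=
  PresentedGroup.toGroup.of lift_rhoGens_eq_one_of_mem_rels

theorem rho_surjective : Function.Surjective rho := by
  refine rho.surjective_of_swap_castSucc_succ_mem_range fun i ↦ ?_
  fin_cases i
  · exact ⟨PresentedGroup.of 0, rho_of 0⟩
  · exact ⟨PresentedGroup.of 3, rho_of 3⟩
  · exact ⟨PresentedGroup.of 2, rho_of 2⟩
  · exact ⟨PresentedGroup.of 4, rho_of 4⟩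

/-- Theorem 3.5 (first step): the assignment `g1 ↦ (1 2)`, `g2 ↦ (1 3)`, `g3 ↦ (3 4)`,
`g4 ↦ (2 3)`, `g5 ↦ (4 5)` extends to a group homomorphism `ρ' : G_II → S₅`, which is
surjective. -/
theorem exists_surjective_hom :
    ∃ ρ' : GII →* Equiv.Perm (Fin 5),
      ρ' (PresentedGroup.of 0) = Equiv.swap 0 1 ∧
      ρ' (PresentedGroup.of 1) = Equiv.swap 0 2 ∧
      ρ' (PresentedGroup.of 2) = Equiv.swap 2 3 ∧
      ρ' (PresentedGroup.of 3) = Equiv.swap 1 2 ∧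
      ρ' (PresentedGroup.of 4) = Equiv.swap 3 4 ∧
      Function.Surjective ρ' :=
  ⟨rho, rho_of 0, rho_of 1, rho_of 2, rho_of 3, rho_of 4, rho_surjective⟩

end Stmt7
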